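/- arXiv:2502.02898 — 2 statements merged into one kernel-verified Lean document; each statement's English description precedes it below -/
import Mathlib

section
/- The function f_2 defined on the unit disk by f_2(z) = ∫₀^z (1 + tanh(t²))^{1/2} dt belongs to the class BT_B, and its second logarithmic coefficient γ_2 = (1/2)(a_3 − a_2²/2) satisfies |γ_2| = 1/12 (its Taylor coefficients satisfy a_2 = 0 and a_3 = 1/6). Hence the bound |γ_2| ≤ 1/12 for the class BT_B is sharp. -/
open Complex Metric

/-- Principal branch of the square root: `w^(1/2) = exp((1/2) * Log w)`. -/
noncomputable def psqrt (w : ℂ) : ℂ := Complex.exp ((1/2 : ℂ) * Complex.log w)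

/-- The `n`-th Taylor coefficient of `f` at `0`, i.e. `f^(n)(0)/n!`. -/
noncomputable def tCoeff (f : ℂ → ℂ) (n : ℕ) : ℂ := iteratedDeriv n f 0 / n.factorial

/-- The class `BT_B` of bounded turning functions associated with the bean-shaped domain:
`f` is analytic on the unit disk, `f 0 = 0`, `f' 0 = 1`, `f` injective on the disk,
and `f'(z) = (1 + tanh (ω z))^(1/2)` for a Schwarz function `ω`. -/
def IsBTB (f : ℂ → ℂ) : Prop :=
  AnalyticOnNhd ℂ f (ball 0 1) ∧ f 0 = 0 ∧ deriv f 0 = 1 ∧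
  Set.InjOn f (ball 0 1) ∧
  ∃ ω : ℂ → ℂ, AnalyticOnNhd ℂ ω (ball 0 1) ∧ ω 0 = 0 ∧
    (∀ z ∈ ball (0:ℂ) 1, ‖ω z‖ < 1) ∧
    (∀ z ∈ ball (0:ℂ) 1, deriv f z = psqrt (1 + Complex.tanh (ω z)))

noncomputable def f₂ (z : ℂ) : ℂ :=
  ∫ t in (0:ℝ)..1, z * psqrt (1 + Complex.tanh (((t : ℂ) * z)^2))

/-!
On the strip `|Im w| < π/2` one has `1 + tanh w = 2 / (1 + e^{-2w})`, and `1 + e^{-2w}` avoids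
the closed negative real axis; so `φ(w) = (1 + tanh w)^{1/2}` is holomorphic there with
`Re φ > 0`. Since `z²` stays in the strip for `|z| < 1`, `f₂` is the primitive of `φ(z²)`
vanishing at `0`, and `Re f₂' > 0` makes `f₂` univalent on the convex disc
(Noshiro–Warschawski). Finally `f₂' = φ(z²) = 1 + φ'(0) z² + O(z⁴)` with `φ'(0) = 1/2`,
giving `a₂ = 0` and `a₃ = 1/6`.
-/

open Filter Topology Set Real

namespace Complex

theorem inv_mem_slitPlane {z : ℂ} (hz : z ∈ slitPlane) : z⁻¹ ∈ slitPlane := by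
  have hN : 0 < normSq z := normSq_pos.mpr (slitPlane_ne_zero hz)
  rw [mem_slitPlane_iff] at hz ⊢
  rw [inv_re, inv_im]
  rcases hz with h | h
  · exact Or.inl (div_pos h hN)
  · exact Or.inr (div_ne_zero (neg_ne_zero.mpr h) hN.ne')

theorem one_add_exp_mem_slitPlane {z : ℂ} (hz : |z.im| < π) : 1 + exp z ∈ slitPlane := by
  rw [mem_slitPlane_iff, add_re, one_re, add_im, one_im, zero_add, exp_re, exp_im]
  by_cases hy : z.im = 0
  · left
    rw [hy, Real.cos_zero, mul_one]
    positivity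
  · right
    have hlt := abs_lt.mp hz
    exact mul_ne_zero (Real.exp_pos _).ne'
      fun h => hy ((Real.sin_eq_zero_iff_of_lt_of_lt hlt.1 hlt.2).mp h)

theorem one_add_exp_neg_two_mul_mem_slitPlane {z : ℂ} (hz : |z.im| < π / 2) :
    1 + exp (-2 * z) ∈ slitPlane :=
  one_add_exp_mem_slitPlane (by
    rw [show (-2 * z).im = -2 * z.im by simp, abs_mul]
    norm_num
    linarith)

theorem cosh_eq_exp_mul_one_add_exp (z : ℂ) : cosh z = exp z * (1 + exp (-2 * z)) / 2 := by
  rw [cosh, mul_add, mul_one, ← exp_add]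
  ring_nf

theorem one_add_tanh_eq {z : ℂ} (h : 1 + exp (-2 * z) ≠ 0) :
    1 + tanh z = ((1 + exp (-2 * z)) / 2)⁻¹ := by
  have hs : sinh z = exp z - cosh z := by rw [← cosh_add_sinh]; ring
  have hexp := exp_ne_zero z
  rw [tanh_eq_sinh_div_cosh, hs, cosh_eq_exp_mul_one_add_exp]
  generalize exp (-2 * z) = e at h ⊢
  field_simp
  ring

theorem one_add_tanh_mem_slitPlane {z : ℂ} (hz : |z.im| < π / 2) :
    1 + tanh z ∈ slitPlane := by
  have h := one_add_exp_neg_two_mul_mem_slitPlane hz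
  rw [one_add_tanh_eq (slitPlane_ne_zero h)]
  refine inv_mem_slitPlane ?_
  rw [mem_slitPlane_iff] at h ⊢
  simpa using h

theorem cosh_ne_zero_of_abs_im_lt {z : ℂ} (hz : |z.im| < π / 2) : cosh z ≠ 0 := by
  rw [cosh_eq_exp_mul_one_add_exp]
  exact div_ne_zero (mul_ne_zero (exp_ne_zero z)
    (slitPlane_ne_zero (one_add_exp_neg_two_mul_mem_slitPlane hz))) two_ne_zero

theorem hasDerivAt_tanh {z : ℂ} (h : cosh z ≠ 0) : HasDerivAt tanh (1 / cosh z ^ 2) z := by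
  have := (hasDerivAt_sinh z).div (hasDerivAt_cosh z) h
  rw [show tanh = sinh / cosh from funext tanh_eq_sinh_div_cosh, ← cosh_sq_sub_sinh_sq z]
  exact this.congr_deriv (by ring)

end Complex

theorem Convex.injOn_of_re_deriv_pos {f : ℂ → ℂ} {U : Set ℂ} (hU : Convex ℝ U)
    (hf : ∀ z ∈ U, DifferentiableAt ℂ f z) (hre : ∀ z ∈ U, 0 < (deriv f z).re) :
    InjOn f U := by
  intro a ha b hb hab
  by_contra hne
  have hγ : ∀ t ∈ Icc (0 : ℝ) 1, a + (t : ℂ) * (b - a) ∈ U := fun t ht => by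
    simpa [real_smul] using hU.add_smul_sub_mem ha hb ht
  -- Noshiro–Warschawski: `t ↦ Re ((b - a)⁻¹ * f (a + t (b - a)))` has positive derivative
  let φ : ℝ → ℝ := fun t => ((b - a)⁻¹ * f (a + t * (b - a))).re
  have hφ : ∀ t ∈ Icc (0 : ℝ) 1, HasDerivAt φ (deriv f (a + t * (b - a))).re t := by
    intro t ht
    have hline : HasDerivAt (fun w : ℂ => a + w * (b - a)) (b - a) t := by
      simpa using ((hasDerivAt_id (t : ℂ)).mul_const (b - a)).const_add a
    have := (((hf _ (hγ t ht)).hasDerivAt.comp (t : ℂ) hline).const_mul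
      (b - a)⁻¹).real_of_complex
    rwa [mul_comm, mul_assoc, mul_inv_cancel₀ (sub_ne_zero.mpr (Ne.symm hne)), mul_one] at this
  obtain ⟨c, hc, hslope⟩ := exists_hasDerivAt_eq_slope φ _ zero_lt_one
    (fun t ht => (hφ t ht).continuousAt.continuousWithinAt)
    (fun t ht => hφ t (Ioo_subset_Icc_self ht))
  have hφ01 : φ 1 = φ 0 := by simp [φ, hab]
  rw [hφ01, sub_self, zero_div] at hslope
  exact (hre _ (hγ c (Ioo_subset_Icc_self hc))).ne' hslope

theorem hasDerivAt_integral_mul_comp_ofReal_mul {g : ℂ → ℂ} {r : ℝ}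
    (hg : DifferentiableOn ℂ g (ball 0 r)) {z : ℂ} (hz : z ∈ ball 0 r) :
    HasDerivAt (fun z => ∫ t in (0 : ℝ)..1, z * g (t * z)) (g z) z := by
  -- by Cauchy–Goursat `g` has a primitive `G` on the disc; the integral is `G z - G 0`
  obtain ⟨G, hG0, hG⟩ := hg.isExactOn_ball.with_val_at 0 0
  suffices hint : ∀ w ∈ ball (0 : ℂ) r, ∫ t in (0 : ℝ)..1, w * g (t * w) = G w from
    (hG z hz).congr_of_eventuallyEq (eventually_of_mem (isOpen_ball.mem_nhds hz) hint)
  intro w hw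
  have hseg : ∀ t ∈ uIcc (0 : ℝ) 1, (t : ℂ) * w ∈ ball (0 : ℂ) r := fun t ht => by
    rw [uIcc_of_le zero_le_one] at ht
    simpa [real_smul] using (convex_ball (0 : ℂ) r).smul_mem_of_zero_mem (mem_ball_self
      (pos_of_mem_ball hw)) hw ht
  have hderiv : ∀ t ∈ uIcc (0 : ℝ) 1, HasDerivAt (fun t : ℝ => G (t * w)) (w * g (t * w)) t :=
    fun t ht => by
      simpa [mul_comm] using
        ((hG _ (hseg t ht)).comp (t : ℂ) (hasDerivAt_mul_const w)).comp_ofReal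
  have hcont : ContinuousOn (fun t : ℝ => w * g (t * w)) (uIcc 0 1) :=
    continuousOn_const.mul (hg.continuousOn.comp (by fun_prop) hseg)
  rw [intervalIntegral.integral_eq_sub_of_hasDerivAt hderiv hcont.intervalIntegrable]
  simp [hG0]

theorem deriv_comp_sq_eventuallyEq {φ : ℂ → ℂ} (hφ : AnalyticAt ℂ φ 0) :
    deriv (fun z => φ (z ^ 2)) =ᶠ[𝓝 0] fun z => deriv φ (z ^ 2) * (2 * z) := by
  have hsq : Tendsto (fun z : ℂ => z ^ 2) (𝓝 0) (𝓝 0) := by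
    simpa using (continuous_pow 2).tendsto (0 : ℂ)
  filter_upwards [hsq.eventually hφ.eventually_analyticAt] with z hz
  simpa [Function.comp_def] using
    (hz.differentiableAt.hasDerivAt.comp z (hasDerivAt_pow 2 z)).deriv

theorem iteratedDeriv_one_comp_sq_zero {φ : ℂ → ℂ} (hφ : AnalyticAt ℂ φ 0) :
    iteratedDeriv 1 (fun z => φ (z ^ 2)) 0 = 0 := by
  simp [iteratedDeriv_one, (deriv_comp_sq_eventuallyEq hφ).eq_of_nhds]

theorem iteratedDeriv_two_comp_sq_zero {φ : ℂ → ℂ} (hφ : AnalyticAt ℂ φ 0) :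
    iteratedDeriv 2 (fun z => φ (z ^ 2)) 0 = 2 * deriv φ 0 := by
  have hd : HasDerivAt (fun z => deriv φ (z ^ 2) * (2 * z)) (2 * deriv φ 0) 0 := by
    have h := (hφ.deriv.differentiableAt.hasDerivAt.comp_of_eq (0 : ℂ) (hasDerivAt_pow 2 0)
      (by simp)).mul ((hasDerivAt_id (0 : ℂ)).const_mul 2)
    simpa [Function.comp_def, Pi.mul_def, mul_comm] using h
  rw [iteratedDeriv_succ, iteratedDeriv_one, (deriv_comp_sq_eventuallyEq hφ).deriv_eq, hd.deriv]

theorem tCoeff_succ_of_deriv_eventuallyEq {f g : ℂ → ℂ} (h : deriv f =ᶠ[𝓝 0] g) (n : ℕ) :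
    tCoeff f (n + 1) = iteratedDeriv n g 0 / (n + 1).factorial := by
  rw [tCoeff, iteratedDeriv_succ', h.iteratedDeriv_eq]

theorem psqrt_re_pos {w : ℂ} (hw : w ∈ slitPlane) : 0 < (psqrt w).re := by
  rw [psqrt, exp_re]
  refine mul_pos (Real.exp_pos _) (Real.cos_pos_of_mem_Ioo ⟨?_, ?_⟩)
  all_goals
    simp only [mul_im, log_re, log_im]
    norm_num
  · linarith [neg_pi_lt_arg w]
  · linarith [(arg_le_pi w).lt_of_ne (slitPlane_arg_ne_pi hw)]

theorem hasDerivAt_psqrt {w : ℂ} (hw : w ∈ slitPlane) :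
    HasDerivAt psqrt (psqrt w * (1 / 2 * w⁻¹)) w :=
  ((hasDerivAt_log hw).const_mul (1 / 2)).cexp

noncomputable def btbPhi (w : ℂ) : ℂ := psqrt (1 + tanh w)

theorem btbPhi_zero : btbPhi 0 = 1 := by simp [btbPhi, psqrt]

theorem hasDerivAt_btbPhi {w : ℂ} (hw : |w.im| < π / 2) :
    HasDerivAt btbPhi (btbPhi w * (1 / 2 * (1 + tanh w)⁻¹) * (1 / cosh w ^ 2)) w :=
  (hasDerivAt_psqrt (one_add_tanh_mem_slitPlane hw)).comp w
    ((hasDerivAt_tanh (cosh_ne_zero_of_abs_im_lt hw)).const_add 1)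

theorem deriv_btbPhi_zero : deriv btbPhi 0 = 1 / 2 := by
  rw [(hasDerivAt_btbPhi (by simp [pi_pos])).deriv, btbPhi_zero]
  simp

theorem btbPhi_re_pos {w : ℂ} (hw : |w.im| < π / 2) : 0 < (btbPhi w).re :=
  psqrt_re_pos (one_add_tanh_mem_slitPlane hw)

theorem abs_im_lt_of_mem_ball {w : ℂ} {r : ℝ} (hw : w ∈ ball (0 : ℂ) r) : |w.im| < r :=
  (abs_im_le_norm w).trans_lt (mem_ball_zero_iff.mp hw)

theorem analyticAt_btbPhi_zero : AnalyticAt ℂ btbPhi 0 :=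
  analyticAt_iff_eventually_differentiableAt.mpr <|
    eventually_of_mem (ball_mem_nhds 0 pi_div_two_pos) fun _ hw =>
      (hasDerivAt_btbPhi (abs_im_lt_of_mem_ball hw)).differentiableAt

theorem abs_im_sq_lt_pi_div_two {w : ℂ} (hw : w ∈ ball (0 : ℂ) 1) : |(w ^ 2).im| < π / 2 :=
  (abs_im_le_norm _).trans_lt <| by
    rw [norm_pow]
    nlinarith [norm_nonneg w, mem_ball_zero_iff.mp hw, pi_gt_three]

theorem hasDerivAt_f₂ {z : ℂ} (hz : z ∈ ball (0 : ℂ) 1) : HasDerivAt f₂ (btbPhi (z ^ 2)) z :=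
  hasDerivAt_integral_mul_comp_ofReal_mul (g := fun w => btbPhi (w ^ 2))
    (fun w hw => ((hasDerivAt_btbPhi (abs_im_sq_lt_pi_div_two hw)).differentiableAt.comp w
      (differentiableAt_pow 2)).differentiableWithinAt) hz

theorem isBTB_f₂ : IsBTB f₂ := by
  have hdiff : ∀ z ∈ ball (0 : ℂ) 1, DifferentiableAt ℂ f₂ z := fun z hz =>
    (hasDerivAt_f₂ hz).differentiableAt
  refine ⟨fun z hz => ?_, by simp [f₂], ?_, ?_, fun z => z ^ 2, fun _ _ => by fun_prop,
    zero_pow two_ne_zero, fun z hz => ?_, fun z hz => (hasDerivAt_f₂ hz).deriv⟩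
  · exact DifferentiableOn.analyticAt (fun w hw => (hdiff w hw).differentiableWithinAt)
      (isOpen_ball.mem_nhds hz)
  · rw [(hasDerivAt_f₂ (mem_ball_self one_pos)).deriv, zero_pow two_ne_zero, btbPhi_zero]
  · refine (convex_ball 0 1).injOn_of_re_deriv_pos hdiff fun z hz => ?_
    rw [(hasDerivAt_f₂ hz).deriv]
    exact btbPhi_re_pos (abs_im_sq_lt_pi_div_two hz)
  · rw [norm_pow]
    exact pow_lt_one₀ (norm_nonneg z) (mem_ball_zero_iff.mp hz) two_ne_zero

theorem BTB_gamma2_sharp :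
    IsBTB f₂ ∧ tCoeff f₂ 2 = 0 ∧ tCoeff f₂ 3 = 1/6 ∧
      ‖(1/2) * (tCoeff f₂ 3 - (tCoeff f₂ 2)^2 / 2)‖ = 1/12 := by
  have hderiv : deriv f₂ =ᶠ[𝓝 0] fun z => btbPhi (z ^ 2) :=
    eventually_of_mem (ball_mem_nhds 0 one_pos) fun z hz => (hasDerivAt_f₂ hz).deriv
  have ha₂ : tCoeff f₂ 2 = 0 := by
    rw [tCoeff_succ_of_deriv_eventuallyEq hderiv,
      iteratedDeriv_one_comp_sq_zero analyticAt_btbPhi_zero, zero_div]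
  have ha₃ : tCoeff f₂ 3 = 1 / 6 := by
    rw [tCoeff_succ_of_deriv_eventuallyEq hderiv,
      iteratedDeriv_two_comp_sq_zero analyticAt_btbPhi_zero, deriv_btbPhi_zero]
    norm_num [Nat.factorial]
  refine ⟨isBTB_f₂, ha₂, ha₃, ?_⟩
  rw [ha₂, ha₃]
  norm_num
end

section
/- Let f be analytic on the unit disk 𝔻 with f(0) = 0 and f'(0) = 1, with Taylor coefficients a_n = f^{(n)}(0)/n!. Suppose ω : 𝔻 → ℂ is analytic with ω(0) = 0 and |ω(z)| < 1 on 𝔻 and f'(z) = (1 + tanh(ω(z)))^{1/2} on 𝔻 (principal square root), and let p = (1 + ω)/(1 − ω) with Taylor expansion p(z) = 1 + c_1 z + c_2 z² + c_3 z³ + ⋯ at 0. Then a_2 = c_1/8, a_3 = c_2/12 − 5c_1²/96, and a_4 = c_3/16 − 5c_1c_2/64 + 31c_1³/1536. -/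
open Complex Metric

/-!
Both `f'` and `p` are compositions with `ω`: near `0`, `f' = φ ∘ ω` with `φ u = (1 + tanh u)^(1/2)`,
and `p = ψ ∘ ω` with `ψ u = (1 + u) / (1 - u)`. As `ω 0 = 0`, Faà di Bruno's formula to third order
expresses the first three Taylor coefficients of both compositions through those of `ω`, `φ` and
`ψ`. The coefficients `1/2, -1/8, -5/48` of `φ` come from comparing coefficients in
`φ² · cosh = exp`, the coefficients `2, 2, 2` of `ψ` from `ψ u · (1 - u) = 1 + u`; eliminating
the coefficients of `ω` leaves the three formulas.
-/

open Filter Topology Finset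

theorem tCoeff_zero (f : ℂ → ℂ) : tCoeff f 0 = f 0 := by simp [tCoeff]

theorem tCoeff_one (f : ℂ → ℂ) : tCoeff f 1 = deriv f 0 := by simp [tCoeff]

theorem tCoeff_succ (f : ℂ → ℂ) (n : ℕ) :
    tCoeff f (n + 1) = tCoeff (deriv f) n / (n + 1) := by
  simp only [tCoeff, iteratedDeriv_succ', Nat.factorial_succ, Nat.cast_mul, Nat.cast_succ]
  field_simp

theorem Filter.EventuallyEq.tCoeff_eq {f g : ℂ → ℂ} (h : f =ᶠ[𝓝 0] g) (n : ℕ) :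
    tCoeff f n = tCoeff g n := by
  rw [tCoeff, tCoeff, h.iteratedDeriv_eq]

theorem tCoeff_mul {f g : ℂ → ℂ} {n : ℕ} (hf : ContDiffAt ℂ n f 0) (hg : ContDiffAt ℂ n g 0) :
    tCoeff (f * g) n = ∑ i ∈ range (n + 1), tCoeff f i * tCoeff g (n - i) := by
  rw [tCoeff, iteratedDeriv_mul hf hg, sum_div]
  refine sum_congr rfl fun i hi => ?_
  have hi : i ≤ n := Nat.lt_succ_iff.mp (mem_range.mp hi)
  rw [tCoeff, tCoeff, Nat.cast_choose ℂ hi]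
  field_simp [Nat.factorial_ne_zero]

section comp

variable {φ ω : ℂ → ℂ}

theorem tCoeff_comp_one (hφ : DifferentiableAt ℂ φ 0) (hω : DifferentiableAt ℂ ω 0)
    (hω0 : ω 0 = 0) : tCoeff (φ ∘ ω) 1 = tCoeff φ 1 * tCoeff ω 1 := by
  rw [tCoeff_one, tCoeff_one, tCoeff_one, deriv_comp _ (by rwa [hω0]) hω, hω0]

theorem tCoeff_comp_two (hφ : ContDiffAt ℂ 2 φ 0) (hω : ContDiffAt ℂ 2 ω 0) (hω0 : ω 0 = 0) :
    tCoeff (φ ∘ ω) 2 = tCoeff φ 1 * tCoeff ω 2 + tCoeff φ 2 * tCoeff ω 1 ^ 2 := by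
  simp only [tCoeff, iteratedDeriv_comp_two (hω0 ▸ hφ) hω, hω0, iteratedDeriv_one]
  norm_num
  ring

theorem tCoeff_comp_three (hφ : ContDiffAt ℂ 3 φ 0) (hω : ContDiffAt ℂ 3 ω 0) (hω0 : ω 0 = 0) :
    tCoeff (φ ∘ ω) 3 = tCoeff φ 1 * tCoeff ω 3 + 2 * tCoeff φ 2 * tCoeff ω 1 * tCoeff ω 2
      + tCoeff φ 3 * tCoeff ω 1 ^ 3 := by
  simp only [tCoeff, iteratedDeriv_comp_three (hω0 ▸ hφ) hω, hω0, iteratedDeriv_one]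
  norm_num [Nat.factorial]
  ring

end comp

theorem tCoeff_affine_one (a b : ℂ) : tCoeff (fun u => a + b * u) 1 = b := by
  simp [tCoeff_one]

theorem tCoeff_affine_of_two_le (a b : ℂ) {n : ℕ} (hn : 2 ≤ n) :
    tCoeff (fun u => a + b * u) n = 0 := by
  obtain ⟨k, rfl⟩ := Nat.exists_eq_add_of_le' hn
  simp [tCoeff, iteratedDeriv_succ']

theorem tCoeff_exp (n : ℕ) : tCoeff Complex.exp n = (n.factorial : ℂ)⁻¹ := by
  simp [tCoeff, iteratedDeriv_eq_iterate, Complex.iter_deriv_exp]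

theorem psqrt_sq {w : ℂ} (hw : w ≠ 0) : psqrt w ^ 2 = w := by
  rw [psqrt, ← Complex.exp_nat_mul, ← mul_assoc]
  norm_num [Complex.exp_log hw]

noncomputable def sqrtOneAddTanh (u : ℂ) : ℂ := psqrt (1 + tanh u)

theorem sqrtOneAddTanh_sq_mul_cosh {u : ℂ} (hu : cosh u ≠ 0) :
    sqrtOneAddTanh u ^ 2 * cosh u = exp u := by
  have h : 1 + tanh u = exp u / cosh u := by
    rw [Complex.tanh, ← Complex.cosh_add_sinh]
    field_simp
  rw [sqrtOneAddTanh, psqrt_sq (h ▸ div_ne_zero (Complex.exp_ne_zero u) hu), h]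
  field_simp

theorem analyticAt_sqrtOneAddTanh : AnalyticAt ℂ sqrtOneAddTanh 0 := by
  have htanh : AnalyticAt ℂ tanh 0 := by
    rw [show tanh = fun u => sinh u / cosh u from funext Complex.tanh_eq_sinh_div_cosh]
    exact Complex.analyticAt_sinh.div Complex.analyticAt_cosh (by simp)
  have hlog : AnalyticAt ℂ (fun u => log (1 + tanh u)) 0 :=
    (analyticAt_const.add htanh).clog (by simp)
  exact (analyticAt_const.mul hlog).cexp'

theorem tCoeff_sqrtOneAddTanh :
    tCoeff sqrtOneAddTanh 1 = 1 / 2 ∧ tCoeff sqrtOneAddTanh 2 = -1 / 8 ∧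
      tCoeff sqrtOneAddTanh 3 = -5 / 48 := by
  have hφ := analyticAt_sqrtOneAddTanh
  have hcosh : ∀ᶠ u in 𝓝 (0 : ℂ), cosh u ≠ 0 :=
    Complex.continuous_cosh.continuousAt.eventually_ne (by simp)
  have hprod : sqrtOneAddTanh * sqrtOneAddTanh * cosh =ᶠ[𝓝 0] exp := by
    filter_upwards [hcosh] with u hu
    simp only [Pi.mul_apply, ← sqrtOneAddTanh_sq_mul_cosh hu, sq]
  have hcoeff (n : ℕ) : ∑ i ∈ range (n + 1), (∑ j ∈ range (i + 1),
      tCoeff sqrtOneAddTanh j * tCoeff sqrtOneAddTanh (i - j)) * tCoeff cosh (n - i) =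
        (n.factorial : ℂ)⁻¹ := by
    rw [← tCoeff_exp, ← hprod.tCoeff_eq, tCoeff_mul (hφ.mul hφ).contDiffAt
      Complex.analyticAt_cosh.contDiffAt]
    refine sum_congr rfl fun i hi => ?_
    rw [tCoeff_mul hφ.contDiffAt hφ.contDiffAt]
  have h0 : tCoeff sqrtOneAddTanh 0 = 1 := by simp [tCoeff_zero, sqrtOneAddTanh, psqrt]
  have e1 := hcoeff 1
  have e2 := hcoeff 2
  have e3 := hcoeff 3
  have c0 : tCoeff cosh 0 = 1 := by simp [tCoeff]
  have c1 : tCoeff cosh 1 = 0 := by simp [tCoeff]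
  have c2 : tCoeff cosh 2 = 1 / 2 := by simp [tCoeff]
  have c3 : tCoeff cosh 3 = 0 := by simp [tCoeff]
  simp only [sum_range_succ, sum_range_zero, h0, c0, c1, c2, c3, Nat.factorial] at e1 e2 e3
  norm_num at e1 e2 e3
  set a₁ := tCoeff sqrtOneAddTanh 1
  set a₂ := tCoeff sqrtOneAddTanh 2
  have h₁ : a₁ = 1 / 2 := by linear_combination e1 / 2
  have h₂ : a₂ = -1 / 8 := by linear_combination e2 / 2 - (a₁ + 1 / 2) / 2 * h₁
  refine ⟨h₁, h₂, ?_⟩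
  linear_combination e3 / 2 - (1 / 2 + a₂) * h₁ - h₂ / 2

noncomputable def cayley (u : ℂ) : ℂ := (1 + u) / (1 - u)

theorem analyticAt_cayley : AnalyticAt ℂ cayley 0 :=
  (analyticAt_const.add analyticAt_id).div (analyticAt_const.sub analyticAt_id) (by simp)

theorem tCoeff_cayley :
    tCoeff cayley 1 = 2 ∧ tCoeff cayley 2 = 2 ∧ tCoeff cayley 3 = 2 := by
  have hprod : cayley * (fun u => 1 + -1 * u) =ᶠ[𝓝 0] fun u => 1 + 1 * u := by
    filter_upwards [eventually_ne_nhds (zero_ne_one : (0 : ℂ) ≠ 1)] with u hu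
    simp only [Pi.mul_apply, cayley]
    field_simp [sub_ne_zero.mpr hu.symm]
    ring
  have hcoeff (n : ℕ) : ∑ i ∈ range (n + 1), tCoeff cayley i * tCoeff (fun u => 1 + -1 * u) (n - i)
      = tCoeff (fun u : ℂ => 1 + 1 * u) n := by
    rw [← hprod.tCoeff_eq, tCoeff_mul analyticAt_cayley.contDiffAt (by fun_prop)]
  have e1 := hcoeff 1
  have e2 := hcoeff 2
  have e3 := hcoeff 3
  simp (disch := norm_num) only [sum_range_succ, sum_range_zero, Nat.reduceSub, tCoeff_zero,
    tCoeff_affine_one, tCoeff_affine_of_two_le] at e1 e2 e3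
  norm_num [cayley] at e1 e2 e3
  have h₁ : tCoeff cayley 1 = 2 := by linear_combination e1
  have h₂ : tCoeff cayley 2 = 2 := by linear_combination e2 + h₁
  exact ⟨h₁, h₂, by linear_combination e3 + h₂⟩

theorem BTB_coeff_formulas_general (f ω : ℂ → ℂ)
    (hω : AnalyticOnNhd ℂ ω (ball 0 1)) (hω0 : ω 0 = 0)
    (hsub : ∀ z ∈ ball (0:ℂ) 1, deriv f z = psqrt (1 + Complex.tanh (ω z)))
    (p : ℂ → ℂ) (hp : p = fun z => (1 + ω z) / (1 - ω z)) :
    tCoeff f 2 = tCoeff p 1 / 8 ∧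
    tCoeff f 3 = tCoeff p 2 / 12 - 5 * (tCoeff p 1)^2 / 96 ∧
    tCoeff f 4 = tCoeff p 3 / 16 - 5 * tCoeff p 1 * tCoeff p 2 / 64
      + 31 * (tCoeff p 1)^3 / 1536 := by
  have hωa : AnalyticAt ℂ ω 0 := hω 0 (mem_ball_self one_pos)
  have hf' : deriv f =ᶠ[𝓝 0] sqrtOneAddTanh ∘ ω :=
    eventually_of_mem (ball_mem_nhds 0 one_pos) hsub
  have hpω : p = cayley ∘ ω := hp
  have ha₂ := tCoeff_succ f 1
  have ha₃ := tCoeff_succ f 2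
  have ha₄ := tCoeff_succ f 3
  norm_num at ha₂ ha₃ ha₄
  obtain ⟨φ₁, φ₂, φ₃⟩ := tCoeff_sqrtOneAddTanh
  obtain ⟨ψ₁, ψ₂, ψ₃⟩ := tCoeff_cayley
  simp only [ha₂, ha₃, ha₄, hf'.tCoeff_eq, hpω,
    tCoeff_comp_one analyticAt_sqrtOneAddTanh.differentiableAt hωa.differentiableAt hω0,
    tCoeff_comp_one analyticAt_cayley.differentiableAt hωa.differentiableAt hω0,
    tCoeff_comp_two analyticAt_sqrtOneAddTanh.contDiffAt hωa.contDiffAt hω0,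
    tCoeff_comp_two analyticAt_cayley.contDiffAt hωa.contDiffAt hω0,
    tCoeff_comp_three analyticAt_sqrtOneAddTanh.contDiffAt hωa.contDiffAt hω0,
    tCoeff_comp_three analyticAt_cayley.contDiffAt hωa.contDiffAt hω0, φ₁, φ₂, φ₃, ψ₁, ψ₂, ψ₃]
  exact ⟨by ring, by ring, by ring⟩

theorem BTB_coeff_formulas (f ω : ℂ → ℂ)
    (hf : AnalyticOnNhd ℂ f (ball 0 1)) (hf0 : f 0 = 0) (hf1 : deriv f 0 = 1)
    (hω : AnalyticOnNhd ℂ ω (ball 0 1)) (hω0 : ω 0 = 0)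
    (hωb : ∀ z ∈ ball (0:ℂ) 1, ‖ω z‖ < 1)
    (hsub : ∀ z ∈ ball (0:ℂ) 1, deriv f z = psqrt (1 + Complex.tanh (ω z)))
    (p : ℂ → ℂ) (hp : p = fun z => (1 + ω z) / (1 - ω z)) :
    tCoeff f 2 = tCoeff p 1 / 8 ∧
    tCoeff f 3 = tCoeff p 2 / 12 - 5 * (tCoeff p 1)^2 / 96 ∧
    tCoeff f 4 = tCoeff p 3 / 16 - 5 * tCoeff p 1 * tCoeff p 2 / 64
      + 31 * (tCoeff p 1)^3 / 1536 :=
  BTB_coeff_formulas_general f ω hω hω0 hsub p hp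
end
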